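/- Let S = [[J_k(λ), a, C], [0, λ, bᵀ], [0, 0, J_k(λ)]] ∈ ℂ^{(2k+1)×(2k+1)} with a, b ∈ ℂ^k, C ∈ ℂ^{k×k}. If b₁ = e₁ᵀb ≠ 0 and a_k = e_kᵀa ≠ 0, then the eigenspace of S for λ is one-dimensional, spanned by (e₁, 0, 0). -/

import Mathlib

/-!
In block coordinates `v = (u, s, w)` the matrix `S - λ` acts as
`(u, s, w) ↦ (N u + s a + C w, bᵀ w, N w)`, where `N = J_k(λ) - λ` is the shift
`(N u)ᵢ = uᵢ₊₁`, whose kernel is `ℂ e₁`. Thus `N w = 0` puts `w` in `ℂ e₁`, and then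
`bᵀ w = b₁ w₁ = 0` forces `w = 0`; the last row of the top block now reads `s a_k = 0`, so
`s = 0`; finally `N u = 0` puts `u` in `ℂ e₁`.
-/

open Matrix

def jordanBlock (k : ℕ) (x : ℂ) : Matrix (Fin k) (Fin k) ℂ :=
  Matrix.of fun i j => if i = j then x else if (i : ℕ) + 1 = (j : ℕ) then 1 else 0

def mkS (k : ℕ) (lam : ℂ) (a b : Fin k → ℂ) (C : Matrix (Fin k) (Fin k) ℂ) :
    Matrix (Fin k ⊕ (Fin 1 ⊕ Fin k)) (Fin k ⊕ (Fin 1 ⊕ Fin k)) ℂ :=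
  Matrix.fromBlocks (jordanBlock k lam)
    (Matrix.of fun i j => Sum.elim (fun _ => a i) (fun j' => C i j') j)
    0
    (Matrix.fromBlocks (Matrix.of fun _ _ => lam) (Matrix.of fun _ j => b j)
      0 (jordanBlock k lam))

section Shift

variable {R : Type*} {k : ℕ}

def shiftVec [Zero R] (u : Fin k → R) : Fin k → R :=
  fun i => if h : (i : ℕ) + 1 < k then u ⟨i + 1, h⟩ else 0

@[simp]
theorem shiftVec_zero [Zero R] : shiftVec (0 : Fin k → R) = 0 :=
  funext fun _ => dite_eq_right_iff.2 fun _ => rfl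

theorem shiftVec_apply_of_le [Zero R] (u : Fin k → R) {i : Fin k} (hi : k ≤ (i : ℕ) + 1) :
    shiftVec u i = 0 :=
  dif_neg hi.not_gt

theorem shiftVec_eq_zero_iff [Semiring R] (hk : 0 < k) (u : Fin k → R) :
    shiftVec u = 0 ↔ ∃ c : R, c • Pi.single ⟨0, hk⟩ 1 = u := by
  constructor
  · intro h
    refine ⟨u ⟨0, hk⟩, funext fun j => ?_⟩
    rcases eq_or_ne j ⟨0, hk⟩ with rfl | hj
    · simp
    · have hj' : (j : ℕ) - 1 + 1 = j := by
        have : (j : ℕ) ≠ 0 := by simpa [Fin.ext_iff] using hj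
        omega
      have hprev := congrFun h ⟨j - 1, by omega⟩
      simp only [shiftVec, hj', j.isLt, dif_pos, Pi.zero_apply] at hprev
      rw [Pi.smul_apply, Pi.single_eq_of_ne hj, smul_zero, ← hprev]
  · rintro ⟨c, rfl⟩
    ext i
    simp [shiftVec, Fin.ext_iff]

theorem sum_ite_succ_eq_shiftVec [AddCommMonoid R] (u : Fin k → R) (i : Fin k) :
    ∑ j : Fin k, (if (i : ℕ) + 1 = j then u j else 0) = shiftVec u i := by
  unfold shiftVec
  split_ifs with h
  · simpa [Fin.ext_iff, eq_comm] using Finset.sum_ite_eq' Finset.univ (⟨i + 1, h⟩ : Fin k) u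
  · exact Finset.sum_eq_zero fun j _ => if_neg (by omega)

end Shift

theorem jordanBlock_mulVec {k : ℕ} (x : ℂ) (u : Fin k → ℂ) :
    jordanBlock k x *ᵥ u = x • u + shiftVec u := by
  ext i
  have hentry : ∀ j, jordanBlock k x i j * u j
      = (if i = j then x * u j else 0) + (if (i : ℕ) + 1 = j then u j else 0) := by
    intro j
    by_cases hij : i = j
    · subst hij; simp [jordanBlock]
    · simp [jordanBlock, hij]
  simp only [mulVec, dotProduct, hentry, Finset.sum_add_distrib, Finset.sum_ite_eq,
    Finset.mem_univ, if_true, Pi.add_apply, Pi.smul_apply, smul_eq_mul, sum_ite_succ_eq_shiftVec]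

theorem mkS_sub_smul_one_mulVec {k : ℕ} (lam : ℂ) (a b : Fin k → ℂ)
    (C : Matrix (Fin k) (Fin k) ℂ) (u : Fin k → ℂ) (s : Fin 1 → ℂ) (w : Fin k → ℂ) :
    (mkS k lam a b C - lam • 1) *ᵥ Sum.elim u (Sum.elim s w)
      = Sum.elim (shiftVec u + s 0 • a + C *ᵥ w) (Sum.elim (fun _ => b ⬝ᵥ w) (shiftVec w)) := by
  rw [sub_mulVec, smul_mulVec, one_mulVec, mkS, fromBlocks_mulVec, fromBlocks_mulVec,
    jordanBlock_mulVec, jordanBlock_mulVec]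
  ext (i | i | i) <;> simp [mulVec, dotProduct, Fin.fin_one_eq_zero]
  ring

/-- If `b₁ ≠ 0` and `a_k ≠ 0`, the eigenspace of `S` for `λ` is spanned by
`(e₁, 0, 0)`. -/
theorem eigenspace_odd_case {k : ℕ} (hk : 0 < k)
    (lam : ℂ) (a b : Fin k → ℂ) (C : Matrix (Fin k) (Fin k) ℂ)
    (hb : b ⟨0, hk⟩ ≠ 0) (ha : a ⟨k - 1, by omega⟩ ≠ 0) :
    LinearMap.ker ((mkS k lam a b C
        - lam • (1 : Matrix (Fin k ⊕ (Fin 1 ⊕ Fin k))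
            (Fin k ⊕ (Fin 1 ⊕ Fin k)) ℂ)).mulVecLin)
      = Submodule.span ℂ
          {Sum.elim (Pi.single (⟨0, hk⟩ : Fin k) (1 : ℂ))
            (0 : Fin 1 ⊕ Fin k → ℂ)} := by
  apply le_antisymm
  · intro v hv
    obtain ⟨u, s, w, rfl⟩ : ∃ u s w, v = Sum.elim u (Sum.elim s w) :=
      ⟨_, _, _, by rw [Sum.elim_comp_inl_inr, Sum.elim_comp_inl_inr]⟩
    rw [LinearMap.mem_ker, mulVecLin_apply, mkS_sub_smul_one_mulVec, ← Sum.elim_zero_zero,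
      ← Sum.elim_zero_zero, Sum.elim_eq_iff, Sum.elim_eq_iff] at hv
    obtain ⟨htop, hmid, hbot⟩ := hv
    obtain ⟨c, rfl⟩ := (shiftVec_eq_zero_iff hk w).1 hbot
    obtain rfl : c = 0 := by simpa [hb] using congrFun hmid 0
    obtain rfl : s = 0 := by
      have hlast := congrFun htop ⟨k - 1, by omega⟩
      rw [Pi.add_apply, Pi.add_apply, shiftVec_apply_of_le u (by simp only; omega)] at hlast
      ext i
      simpa [Fin.fin_one_eq_zero i, ha] using hlast
    obtain ⟨c, rfl⟩ := (shiftVec_eq_zero_iff hk u).1 (by simpa using htop)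
    exact Submodule.mem_span_singleton.2 ⟨c, by ext (i | i | i) <;> simp [-Sum.elim_single_zero]⟩
  · rw [Submodule.span_le, Set.singleton_subset_iff, SetLike.mem_coe, LinearMap.mem_ker,
      mulVecLin_apply, ← Sum.elim_zero_zero, mkS_sub_smul_one_mulVec,
      (shiftVec_eq_zero_iff hk _).2 ⟨1, one_smul _ _⟩]
    ext (i | i | i) <;> simp
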